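/- arXiv:1706.01294 — 4 statements merged into one kernel-verified Lean document; each statement's English description precedes it below -/
import Mathlib

section
/- Let (R,(π)) be a local principal ideal domain that is not a field, with residue field F = R/(π), let M be a finitely generated free R-module and φ an R-module endomorphism of M. For i ≥ 0 set M_i = {m ∈ M | φ(m) ∈ π^i M}, let M̄_i denote the image of M_i in M̄ = M/πM, and let e_i = dim_F(M̄_i/M̄_{i+1}) (the multiplicity of π^i as an elementary divisor of φ). Let d = Σ_{i≥0} i·e_i (the π-adic valuation of the product of the nonzero elementary divisors of φ). Suppose there are indices 0 < a_1 < a_2 < … < a_h and integers b_1 > b_2 > … > b_h such that (1) dim_F M̄_{a_j} ≥ b_j for j = 1,…,h, and (2) Σ_{j=1}^{h} (b_j − b_{j+1}) a_j = d, where b_{h+1} = dim_F of the image of Ker(φ) in M̄. Then: (i) e_{a_j} = b_j − b_{j+1} for j = 1,…,h; (ii) e_0 = dim_F M̄ − b_1; (iii) e_i = 0 for every i not in {0, a_1, …, a_h}. -/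
/-!
Let `f i = dim M̄_i`. By Artin–Rees, `φ⁻¹(𝔪ⁱM) ⊆ ker φ + 𝔪M` for large `i`, so `f` decreases
from `dim M̄` to `k₀ = dim (image of ker φ)` and then stays there; `e i = f i - f (i + 1)`, and
Abel summation gives `d = ∑_{i ≥ 1} (f i - k₀)`. The bounds `b_j ≤ f (a_j)` say that `f`
dominates the step function equal to `b_j` on `(a_{j-1}, a_j]` and to `k₀` beyond `a_h`, whose
excess over `k₀` sums to `∑ (b_j - b_{j+1}) a_j = d`. Hence `f` equals that step function, and
the `e i` are its jumps.
-/

open scoped TensorProduct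

open Finset IsLocalRing

theorem Finset.sum_range_mul_sub_succ (f : ℕ → ℤ) (n : ℕ) :
    ∑ i ∈ range (n + 1), (i : ℤ) * (f i - f (i + 1)) = ∑ i ∈ Icc 1 n, (f i - f (n + 1)) := by
  induction n with
  | zero => simp
  | succ n ih =>
    rw [sum_range_succ, ih, sum_Icc_succ_top (by omega)]
    simp only [sum_sub_distrib, sum_const, Nat.card_Icc, nsmul_eq_mul]
    push_cast
    ring

theorem tsum_mul_eq_sum_Icc_sub {g : ℕ → ℕ} {f : ℕ → ℤ} {n : ℕ} {c : ℤ}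
    (hg : ∀ i, (g i : ℤ) = f i - f (i + 1)) (hf : ∀ i ≥ n, f i = c) :
    ((∑' i, i * g i : ℕ) : ℤ) = ∑ i ∈ Icc 1 n, (f i - c) := by
  have hg0 : ∀ i ≥ n, g i = 0 := fun i hi => by
    have := hg i
    rw [hf i hi, hf (i + 1) (by omega)] at this
    omega
  rw [tsum_eq_sum (s := range (n + 1)) fun i hi => by
    rw [hg0 i (by simp at hi; omega), mul_zero]]
  push_cast
  simp only [hg, sum_range_mul_sub_succ, hf (n + 1) (by omega)]

theorem Submodule.finrank_quotient_comap_subtype_add {K V : Type*} [DivisionRing K]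
    [AddCommGroup V] [Module K V] [FiniteDimensional K V] {p q : Submodule K V} (hpq : p ≤ q) :
    Module.finrank K (q ⧸ p.comap q.subtype) + Module.finrank K p = Module.finrank K q := by
  rw [← (Submodule.comapSubtypeEquivOfLe hpq).finrank_eq]
  exact Submodule.finrank_quotient_add_finrank _

theorem LinearMap.exists_comap_pow_smul_top_le_ker_sup {R N M : Type*} [CommRing R]
    [IsNoetherianRing R] [AddCommGroup N] [Module R N] [AddCommGroup M] [Module R M]
    [Module.Finite R M] (I : Ideal R) (φ : N →ₗ[R] M) :
    ∃ k, ∀ n > k, (I ^ n • ⊤ : Submodule R M).comap φ ≤ LinearMap.ker φ ⊔ I • ⊤ := by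
  obtain ⟨k, hk⟩ := I.exists_pow_inf_eq_pow_smul (LinearMap.range φ)
  refine ⟨k, fun n hn x hx => ?_⟩
  have hφx : φ x ∈ Submodule.map φ (I • ⊤) := by
    rw [Submodule.map_smul'', Submodule.map_top]
    have hmem : φ x ∈ I ^ n • ⊤ ⊓ LinearMap.range φ := ⟨hx, x, rfl⟩
    rw [hk n hn.le] at hmem
    exact Submodule.smul_mono (Ideal.pow_le_self (by omega)) inf_le_right hmem
  obtain ⟨y, hy, hφy⟩ := hφx
  exact Submodule.mem_sup.2 ⟨x - y, by simp [hφy], y, hy, sub_add_cancel x y⟩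

namespace IsLocalRing

variable {R M : Type*} [CommRing R] [IsLocalRing R] [AddCommGroup M] [Module R M]

theorem tensorProduct_mk_eq_zero_of_mem {x : M} (hx : x ∈ maximalIdeal R • (⊤ : Submodule R M)) :
    TensorProduct.mk R (ResidueField R) M 1 x = 0 := by
  refine Submodule.smul_induction_on hx (fun r hr y _ => ?_) fun y z hy hz => ?_
  · rw [map_smul, ← algebraMap_smul (ResidueField R), ResidueField.algebraMap_eq,
      (residue_eq_zero_iff r).2 hr, zero_smul]
  · rw [map_add, hy, hz, add_zero]

theorem span_tensorProduct_mk_sup_maximalIdeal_smul (P : Submodule R M) :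
    Submodule.span (ResidueField R)
        (TensorProduct.mk R (ResidueField R) M 1 '' ↑(P ⊔ maximalIdeal R • ⊤)) =
      Submodule.span (ResidueField R) (TensorProduct.mk R (ResidueField R) M 1 '' P) := by
  refine le_antisymm (Submodule.span_le.2 ?_)
    (Submodule.span_mono (Set.image_mono (SetLike.coe_mono le_sup_left)))
  rintro _ ⟨x, hx, rfl⟩
  obtain ⟨y, hy, z, hz, rfl⟩ := Submodule.mem_sup.1 hx
  rw [map_add, tensorProduct_mk_eq_zero_of_mem hz, add_zero]
  exact Submodule.subset_span ⟨y, hy, rfl⟩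

variable {N : Type*} [AddCommGroup N] [Module R N]

/-- The subspaces `M̄_i` of the paper, with `(π ^ i)` written as `𝔪 ^ i`. -/
noncomputable def residueFiltration (φ : N →ₗ[R] M) (i : ℕ) :
    Submodule (ResidueField R) (ResidueField R ⊗[R] N) :=
  Submodule.span (ResidueField R)
    (TensorProduct.mk R (ResidueField R) N 1 '' (maximalIdeal R ^ i • ⊤ : Submodule R M).comap φ)

theorem residueFiltration_antitone (φ : N →ₗ[R] M) : Antitone (residueFiltration φ) :=
  fun _ _ hij => Submodule.span_mono <| Set.image_mono <| Submodule.comap_mono <|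
    Submodule.smul_mono_left (Ideal.pow_le_pow_right hij)

theorem residueFiltration_zero (φ : N →ₗ[R] M) : residueFiltration φ 0 = ⊤ := by
  rw [residueFiltration, pow_zero, Ideal.one_eq_top, Submodule.top_smul, Submodule.comap_top,
    Submodule.top_coe, Set.image_univ,
    (TensorProduct.mk_surjective R N _ residue_surjective).range_eq, Submodule.span_univ]

theorem span_tensorProduct_mk_ker_le_residueFiltration (φ : N →ₗ[R] M) (i : ℕ) :
    Submodule.span (ResidueField R) (TensorProduct.mk R (ResidueField R) N 1 '' LinearMap.ker φ) ≤
      residueFiltration φ i :=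
  Submodule.span_mono <| Set.image_mono fun x hx => by
    simp [LinearMap.mem_ker.1 hx]

theorem exists_residueFiltration_eq [IsNoetherianRing R] [Module.Finite R M] (φ : N →ₗ[R] M) :
    ∃ k, ∀ i > k, residueFiltration φ i = Submodule.span (ResidueField R)
      (TensorProduct.mk R (ResidueField R) N 1 '' LinearMap.ker φ) := by
  obtain ⟨k, hk⟩ := φ.exists_comap_pow_smul_top_le_ker_sup (maximalIdeal R)
  refine ⟨k, fun i hi => le_antisymm ?_ (span_tensorProduct_mk_ker_le_residueFiltration φ i)⟩
  rw [← span_tensorProduct_mk_sup_maximalIdeal_smul]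
  exact Submodule.span_mono (Set.image_mono (hk i hi))

end IsLocalRing

section StepProfile

variable (a : ℕ → ℕ) (b : ℕ → ℤ) (h : ℕ)

/-- For strictly increasing `a`, this is `b j` on `(a (j - 1), a j]` (with `a 0` read as `0`) and
`b (h + 1)` beyond `a h`. -/
def stepProfile (i : ℕ) : ℤ :=
  b (h + 1) + ∑ j ∈ Icc 1 h with i ≤ a j, (b j - b (j + 1))

variable {a b h}

theorem stepProfile_eq_of_filter_eq {i j : ℕ} (hj : j ≤ h + 1)
    (hfilter : {j' ∈ Icc 1 h | i ≤ a j'} = Icc j h) : stepProfile a b h i = b j := by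
  have htel := sum_Ico_sub (fun k => -b k) hj
  simp only [neg_sub_neg] at htel
  rw [stepProfile, hfilter, ← Ico_add_one_right_eq_Icc, htel]
  ring

theorem stepProfile_of_forall_le {i : ℕ} (hi : ∀ j ∈ Icc 1 h, i ≤ a j) :
    stepProfile a b h i = b 1 :=
  stepProfile_eq_of_filter_eq (by omega) (filter_true_of_mem hi)

theorem stepProfile_of_forall_lt {i : ℕ} (hi : ∀ j ∈ Icc 1 h, a j < i) :
    stepProfile a b h i = b (h + 1) :=
  stepProfile_eq_of_filter_eq le_rfl <| by
    rw [filter_false_of_mem fun j hj => not_le.2 (hi j hj), Icc_eq_empty_of_lt]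
    omega

theorem stepProfile_add_one_of_forall_ne {i : ℕ} (hi : ∀ j ∈ Icc 1 h, a j ≠ i) :
    stepProfile a b h (i + 1) = stepProfile a b h i := by
  unfold stepProfile
  congr 2
  exact filter_congr fun j hj => by have := hi j hj; omega

theorem stepProfile_at_a (ha : StrictMonoOn a (Set.Icc 1 h)) {j : ℕ} (hj : j ∈ Icc 1 h) :
    stepProfile a b h (a j) = b j := by
  rw [mem_Icc] at hj
  refine stepProfile_eq_of_filter_eq (by omega) ?_
  ext j'
  simp only [mem_filter, mem_Icc]
  constructor
  · rintro ⟨hj', hle⟩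
    exact ⟨(ha.le_iff_le hj hj').1 hle, hj'.2⟩
  · rintro ⟨hle, hj'h⟩
    have hj' : j' ∈ Set.Icc 1 h := ⟨hj.1.trans hle, hj'h⟩
    exact ⟨hj', (ha.le_iff_le hj hj').2 hle⟩

theorem stepProfile_at_a_add_one (ha : StrictMonoOn a (Set.Icc 1 h)) {j : ℕ}
    (hj : j ∈ Icc 1 h) : stepProfile a b h (a j + 1) = b (j + 1) := by
  rw [mem_Icc] at hj
  refine stepProfile_eq_of_filter_eq (by omega) ?_
  ext j'
  simp only [mem_filter, mem_Icc, Nat.add_one_le_iff]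
  constructor
  · rintro ⟨hj', hlt⟩
    exact ⟨(ha.lt_iff_lt hj hj').1 hlt, hj'.2⟩
  · rintro ⟨hlt, hj'h⟩
    have hj' : j' ∈ Set.Icc 1 h := ⟨by omega, hj'h⟩
    exact ⟨hj', (ha.lt_iff_lt hj hj').2 hlt⟩

theorem stepProfile_le (ha : StrictMonoOn a (Set.Icc 1 h)) {f : ℕ → ℤ} (hf : Antitone f)
    (hfb : ∀ i, b (h + 1) ≤ f i) (hb : ∀ j ∈ Icc 1 h, b j ≤ f (a j)) (i : ℕ) :
    stepProfile a b h i ≤ f i := by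
  rcases ({j ∈ Icc 1 h | i ≤ a j}).eq_empty_or_nonempty with hempty | hne
  · rw [filter_eq_empty_iff] at hempty
    rw [stepProfile_of_forall_lt fun j hj => not_le.1 (hempty hj)]
    exact hfb i
  obtain ⟨j₀, hj₀, hmin⟩ := exists_min_image _ a hne
  rw [mem_filter] at hj₀
  have hprofile : stepProfile a b h i = stepProfile a b h (a j₀) := by
    unfold stepProfile
    congr 2
    exact filter_congr fun j hj => ⟨fun hij => hmin j (mem_filter.2 ⟨hj, hij⟩), hj₀.2.trans⟩
  calc stepProfile a b h i = b j₀ := by rw [hprofile, stepProfile_at_a ha hj₀.1]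
    _ ≤ f (a j₀) := hb j₀ hj₀.1
    _ ≤ f i := hf hj₀.2

theorem sum_Icc_stepProfile_sub {N : ℕ} (haN : ∀ j ∈ Icc 1 h, a j ≤ N) :
    ∑ i ∈ Icc 1 N, (stepProfile a b h i - b (h + 1)) =
      ∑ j ∈ Icc 1 h, (b j - b (j + 1)) * a j := by
  simp only [stepProfile, add_sub_cancel_left, sum_filter]
  rw [sum_comm]
  refine sum_congr rfl fun j hj => ?_
  rw [← sum_filter, sum_const, nsmul_eq_mul, mul_comm]
  have hfilter : {i ∈ Icc 1 N | i ≤ a j} = Icc 1 (a j) := by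
    ext i; simp only [mem_filter, mem_Icc]; have := haN j hj; omega
  rw [hfilter, Nat.card_Icc, Nat.add_sub_cancel]

theorem eq_stepProfile_of_sum_eq (ha : StrictMonoOn a (Set.Icc 1 h)) {f : ℕ → ℤ}
    (hf : Antitone f) {N : ℕ} (hfN : ∀ i ≥ N, f i = b (h + 1)) (haN : ∀ j ∈ Icc 1 h, a j ≤ N)
    (hb : ∀ j ∈ Icc 1 h, b j ≤ f (a j))
    (hsum : ∑ j ∈ Icc 1 h, (b j - b (j + 1)) * a j = ∑ i ∈ Icc 1 N, (f i - b (h + 1)))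
    {i : ℕ} (hi : 1 ≤ i) : f i = stepProfile a b h i := by
  have hfb : ∀ i, b (h + 1) ≤ f i := fun i =>
    hfN (max i N) (le_max_right i N) ▸ hf (le_max_left i N)
  by_cases hiN : i ≤ N
  · have hle : ∀ i ∈ Icc 1 N, stepProfile a b h i - b (h + 1) ≤ f i - b (h + 1) :=
      fun i _ => sub_le_sub_right (stepProfile_le ha hf hfb hb i) _
    have := (sum_eq_sum_iff_of_le hle).1 (by rw [sum_Icc_stepProfile_sub haN, hsum]) i
      (mem_Icc.2 ⟨hi, hiN⟩)
    linarith
  · rw [hfN i (by omega), stepProfile_of_forall_lt fun j hj => (haN j hj).trans_lt (by omega)]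

end StepProfile

theorem elementary_divisor_multiplicities_lemma_general
    (R : Type) [CommRing R] [IsPrincipalIdealRing R] [IsLocalRing R]
    (π : R) (hπ : IsLocalRing.maximalIdeal R = Ideal.span {π})
    (M : Type) [AddCommGroup M] [Module R M] [Module.Finite R M]
    (φ : M →ₗ[R] M)
    (S : ℕ → Submodule (IsLocalRing.ResidueField R) (IsLocalRing.ResidueField R ⊗[R] M))
    (hS : ∀ i, S i = Submodule.span (IsLocalRing.ResidueField R)
      (⇑(TensorProduct.mk R (IsLocalRing.ResidueField R) M 1) ''
        ↑(Submodule.comap φ (Ideal.span {π ^ i} • (⊤ : Submodule R M)))))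
    (e : ℕ → ℕ)
    (he : ∀ i, e i = Module.finrank (IsLocalRing.ResidueField R)
      (@HasQuotient.Quotient _ _ (@Submodule.hasQuotient _ _ _ (S i).addCommGroup _)
        (Submodule.comap (S i).subtype (S (i + 1)))))
    (d : ℕ) (hd : d = ∑' i, i * e i)
    (k₀ : ℕ)
    (hk₀ : k₀ = Module.finrank (IsLocalRing.ResidueField R)
      ↥(Submodule.span (IsLocalRing.ResidueField R)
        (⇑(TensorProduct.mk R (IsLocalRing.ResidueField R) M 1) '' ↑(LinearMap.ker φ))))
    (h : ℕ) (hh : 1 ≤ h)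
    (a b : ℕ → ℕ)
    (ha1 : 0 < a 1)
    (hamono : ∀ j, 1 ≤ j → j < h → a j < a (j + 1))
    (hbtop : b (h + 1) = k₀)
    (hlb : ∀ j, 1 ≤ j → j ≤ h →
      b j ≤ Module.finrank (IsLocalRing.ResidueField R) ↥(S (a j)))
    (hsum : ∑ j ∈ Finset.Icc 1 h, ((b j : ℤ) - (b (j + 1) : ℤ)) * (a j : ℤ) = (d : ℤ)) :
    (∀ j, 1 ≤ j → j ≤ h → (e (a j) : ℤ) = (b j : ℤ) - (b (j + 1) : ℤ)) ∧
    ((e 0 : ℤ) =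
      (Module.finrank (IsLocalRing.ResidueField R) (IsLocalRing.ResidueField R ⊗[R] M) : ℤ)
        - (b 1 : ℤ)) ∧
    (∀ i, i ≠ 0 → (∀ j, 1 ≤ j → j ≤ h → i ≠ a j) → e i = 0) := by
  obtain rfl : S = residueFiltration φ := funext fun i => by
    rw [hS, ← Ideal.span_singleton_pow, ← hπ]; rfl
  set f : ℕ → ℤ := fun i => Module.finrank (ResidueField R) (residueFiltration φ i)
  have hef : ∀ i, (e i : ℤ) = f i - f (i + 1) := fun i => by
    have := Submodule.finrank_quotient_comap_subtype_add
      (residueFiltration_antitone φ (Nat.le_add_right i 1))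
    simp only [he i, f]
    omega
  have hf : Antitone f := fun i j hij => by
    simp only [f]
    exact_mod_cast Submodule.finrank_mono (residueFiltration_antitone φ hij)
  have ha : StrictMonoOn a (Set.Icc 1 h) := strictMonoOn_of_lt_succ Set.ordConnected_Icc
    fun j _ hj hj1 => hamono j hj.1 (by simpa using hj1.2)
  have haj : ∀ j ∈ Icc 1 h, 1 ≤ a j ∧ a j ≤ a h := fun j hj =>
    ⟨ha1.trans_le (ha.monotoneOn ⟨le_rfl, hh⟩ (mem_Icc.1 hj) (mem_Icc.1 hj).1),
      ha.monotoneOn (mem_Icc.1 hj) ⟨hh, le_rfl⟩ (mem_Icc.1 hj).2⟩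
  obtain ⟨k, hk⟩ := exists_residueFiltration_eq φ
  have hfN : ∀ i ≥ max (k + 1) (a h), f i = b (h + 1) := fun i hi => by
    simp only [f]
    rw [hk i (by omega), hbtop, hk₀]
  have hprofile := fun i (hi : 1 ≤ i) =>
    eq_stepProfile_of_sum_eq (b := fun j => (b j : ℤ)) ha hf hfN
    (fun j hj => (haj j hj).2.trans (le_max_right _ _))
    (fun j hj => by simp only [f]; exact_mod_cast hlb j (mem_Icc.1 hj).1 (mem_Icc.1 hj).2)
    (by rw [hsum, hd]; exact tsum_mul_eq_sum_Icc_sub hef hfN) hi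
  refine ⟨fun j hj1 hjh => ?_, ?_, fun i hi0 hne => ?_⟩
  · have hj : j ∈ Icc 1 h := mem_Icc.2 ⟨hj1, hjh⟩
    rw [hef, hprofile _ (haj j hj).1, hprofile _ (by omega), stepProfile_at_a ha hj,
      stepProfile_at_a_add_one ha hj]
  · rw [hef 0, hprofile 1 le_rfl, stepProfile_of_forall_le fun j hj => (haj j hj).1]
    simp only [f]
    rw [residueFiltration_zero, finrank_top]
  · have := hef i
    rw [hprofile i (by omega), hprofile (i + 1) (by omega), stepProfile_add_one_of_forall_ne
      fun j hj => (hne j (mem_Icc.1 hj).1 (mem_Icc.1 hj).2).symm] at this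
    omega

/-- Key elementary-divisor lemma: let `(R,(π))` be a local PID which is not a field, with
residue field `F`, `M` a finitely generated free `R`-module and `φ` an `R`-endomorphism of
`M`.  Let `M_i = φ⁻¹(π^i M)`, let `S i = M̄_i` be the image of `M_i` in `M̄ = M/πM ≅ F ⊗ M`,
let `e i = dim_F (M̄_i / M̄_{i+1})` (the multiplicity of `π^i` as an elementary divisor of
`φ`) and `d = ∑ i·e_i`.  Given indices `0 < a_1 < ⋯ < a_h` and bounds `b_1 > ⋯ > b_h` with
`dim_F M̄_{a_j} ≥ b_j` and `∑_{j=1}^h (b_j − b_{j+1}) a_j = d`, where `b_{h+1}` is the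
dimension of the image of `ker φ` in `M̄`, one has `e_{a_j} = b_j − b_{j+1}`,
`e_0 = dim_F M̄ − b_1`, and `e_i = 0` for `i ∉ {0, a_1, …, a_h}`. -/
theorem elementary_divisor_multiplicities_lemma
    (R : Type) [CommRing R] [IsDomain R] [IsPrincipalIdealRing R] [IsLocalRing R]
    (hR : ¬ IsField R)
    (π : R) (hπ : IsLocalRing.maximalIdeal R = Ideal.span {π})
    (M : Type) [AddCommGroup M] [Module R M] [Module.Free R M] [Module.Finite R M]
    (φ : M →ₗ[R] M)
    (S : ℕ → Submodule (IsLocalRing.ResidueField R) (IsLocalRing.ResidueField R ⊗[R] M))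
    (hS : ∀ i, S i = Submodule.span (IsLocalRing.ResidueField R)
      (⇑(TensorProduct.mk R (IsLocalRing.ResidueField R) M 1) ''
        ↑(Submodule.comap φ (Ideal.span {π ^ i} • (⊤ : Submodule R M)))))
    (e : ℕ → ℕ)
    (he : ∀ i, e i = Module.finrank (IsLocalRing.ResidueField R)
      (@HasQuotient.Quotient _ _ (@Submodule.hasQuotient _ _ _ (S i).addCommGroup _)
        (Submodule.comap (S i).subtype (S (i + 1)))))
    (d : ℕ) (hd : d = ∑' i, i * e i)
    (k₀ : ℕ)
    (hk₀ : k₀ = Module.finrank (IsLocalRing.ResidueField R)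
      ↥(Submodule.span (IsLocalRing.ResidueField R)
        (⇑(TensorProduct.mk R (IsLocalRing.ResidueField R) M 1) '' ↑(LinearMap.ker φ))))
    (h : ℕ) (hh : 1 ≤ h)
    (a b : ℕ → ℕ)
    (ha1 : 0 < a 1)
    (hamono : ∀ j, 1 ≤ j → j < h → a j < a (j + 1))
    (hbmono : ∀ j, 1 ≤ j → j < h → b (j + 1) < b j)
    (hbtop : b (h + 1) = k₀)
    (hlb : ∀ j, 1 ≤ j → j ≤ h →
      b j ≤ Module.finrank (IsLocalRing.ResidueField R) ↥(S (a j)))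
    (hsum : ∑ j ∈ Finset.Icc 1 h, ((b j : ℤ) - (b (j + 1) : ℤ)) * (a j : ℤ) = (d : ℤ)) :
    (∀ j, 1 ≤ j → j ≤ h → (e (a j) : ℤ) = (b j : ℤ) - (b (j + 1) : ℤ)) ∧
    ((e 0 : ℤ) =
      (Module.finrank (IsLocalRing.ResidueField R) (IsLocalRing.ResidueField R ⊗[R] M) : ℤ)
        - (b 1 : ℤ)) ∧
    (∀ i, i ≠ 0 → (∀ j, 1 ≤ j → j ≤ h → i ≠ a j) → e i = 0) :=
  elementary_divisor_multiplicities_lemma_general R π hπ M φ S hS e he d hd k₀ hk₀ h hh a b ha1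
    hamono hbtop hlb hsum
end

section
/- Let (R,(π)) be a local principal ideal domain that is not a field, with residue field F = R/(π) and field of fractions K. Let M be a finitely generated free R-module and φ an R-module endomorphism of M, inducing φ_K on M_K = K ⊗_R M. Suppose u ∈ R is an eigenvalue of φ_K, and let d be the K-dimension of the eigenspace {m ∈ M_K | φ_K(m) = u·m}. Then for every b ≥ 0 with π^b dividing u, one has d ≤ dim_F M̄_b, where M_b = {m ∈ M | φ(m) ∈ π^b M} and M̄_b is its image in M/πM. -/
open scoped TensorProduct
open Module

/-!
The eigenvectors of `φ` in `M` form `N = ker (φ - u)`. Since `M / N ≅ im (φ - u) ⊆ M` is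
torsion-free and finitely generated over a PID, it is free, so `N` is a direct summand of `M`.
Hence `F ⊗ N` injects into `F ⊗ M`, with image `N̄`, and both `K ⊗ N` (which is the eigenspace
of `φ_K`, by flatness of `K`) and `N̄` have dimension `rank N`. Finally `N ⊆ M_b`, because
`φ m = u m ∈ π^b M` for `m ∈ N`.
-/

theorem Submodule.finrank_baseChange_of_leftInverse {R A M : Type*} [CommRing R] [CommRing A]
    [Algebra R A] [StrongRankCondition R] [StrongRankCondition A] [AddCommGroup M] [Module R M]
    (p : Submodule R M) [Module.Free R p] [Module.Finite R p]
    (r : M →ₗ[R] p) (hr : r ∘ₗ p.subtype = LinearMap.id) :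
    finrank A (p.baseChange A) = finrank R p := by
  have hinj : Function.Injective (p.subtype.baseChange A) := by
    refine Function.LeftInverse.injective (g := r.baseChange A) fun x => ?_
    rw [← LinearMap.comp_apply, ← LinearMap.baseChange_comp, hr, LinearMap.baseChange_id,
      LinearMap.id_apply]
  rw [Submodule.baseChange, LinearMap.finrank_range_of_inj hinj, finrank_baseChange]

theorem LinearMap.exists_leftInverse_ker_subtype {R M N : Type*} [CommRing R] [IsDomain R]
    [IsPrincipalIdealRing R] [AddCommGroup M] [Module R M] [Module.Finite R M]
    [AddCommGroup N] [Module R N] [Module.IsTorsionFree R N] (f : M →ₗ[R] N) :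
    ∃ r : M →ₗ[R] LinearMap.ker f, r ∘ₗ (LinearMap.ker f).subtype = LinearMap.id := by
  have : Module.Free R (LinearMap.range f) := Module.free_of_finite_type_torsion_free'
  obtain ⟨s, hs⟩ := f.rangeRestrict.exists_rightInverse_of_surjective f.range_rangeRestrict
  have hexact : Function.Exact (LinearMap.ker f).subtype f.rangeRestrict := by
    rw [LinearMap.exact_iff, LinearMap.ker_rangeRestrict, Submodule.range_subtype]
  exact ((hexact.split_tfae (LinearMap.ker f).injective_subtype
    f.surjective_rangeRestrict).out 0 1).mp (Exists.intro s hs)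

theorem LinearMap.finrank_ker_baseChange {R A M N : Type*} [CommRing R] [CommRing A]
    [Algebra R A] [Module.Flat R A] [StrongRankCondition R] [StrongRankCondition A]
    [AddCommGroup M] [Module R M] [AddCommGroup N] [Module R N] (f : M →ₗ[R] N)
    [Module.Free R (LinearMap.ker f)] [Module.Finite R (LinearMap.ker f)] :
    finrank A (LinearMap.ker (f.baseChange A)) = finrank R (LinearMap.ker f) :=
  (LinearMap.tensorKerEquiv A A f).finrank_eq.symm.trans finrank_baseChange

theorem LinearMap.eigenspace_baseChange {R A M : Type*} [CommRing R] [CommRing A]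
    [Algebra R A] [AddCommGroup M] [Module R M] (f : Module.End R M) (u : R) :
    Module.End.eigenspace (f.baseChange A) (algebraMap R A u) =
      LinearMap.ker ((f - u • 1).baseChange A) := by
  rw [Module.End.eigenspace_def, LinearMap.baseChange_sub, LinearMap.baseChange_smul,
    LinearMap.baseChange_one, algebraMap_smul]

theorem Module.End.ker_sub_smul_one_le_comap_smul_top {R M : Type*} [CommRing R] [AddCommGroup M]
    [Module R M] (f : Module.End R M) {I : Ideal R} {u : R} (hu : u ∈ I) :
    LinearMap.ker (f - u • 1) ≤ (I • ⊤ : Submodule R M).comap f := by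
  intro m hm
  rw [LinearMap.mem_ker, LinearMap.sub_apply, sub_eq_zero] at hm
  rw [Submodule.mem_comap, hm]
  exact Submodule.smul_mem_smul hu trivial

theorem eigenspace_dim_le_dim_Mbar_general
    (R : Type) [CommRing R] [IsDomain R] [IsPrincipalIdealRing R] [IsLocalRing R]
    (π : R)
    (M : Type) [AddCommGroup M] [Module R M] [Module.Free R M] [Module.Finite R M]
    (φ : M →ₗ[R] M)
    (u : R)
    (b : ℕ) (hb : π ^ b ∣ u) :
    Module.finrank (FractionRing R)
        ↥(Module.End.eigenspace (LinearMap.baseChange (FractionRing R) φ)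
          (algebraMap R (FractionRing R) u)) ≤
      Module.finrank (IsLocalRing.ResidueField R)
        ↥(Submodule.span (IsLocalRing.ResidueField R)
          (⇑(TensorProduct.mk R (IsLocalRing.ResidueField R) M 1) ''
            ↑(Submodule.comap φ (Ideal.span {π ^ b} • (⊤ : Submodule R M))))) := by
  set N := LinearMap.ker (φ - u • 1)
  obtain ⟨r, hr⟩ := (φ - u • 1).exists_leftInverse_ker_subtype
  have hN_le : N ≤ (Ideal.span {π ^ b} • (⊤ : Submodule R M)).comap φ :=
    Module.End.ker_sub_smul_one_le_comap_smul_top φ (Ideal.mem_span_singleton.mpr hb)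
  calc finrank (FractionRing R) _
      = finrank R N := by rw [φ.eigenspace_baseChange, LinearMap.finrank_ker_baseChange]
    _ = finrank (IsLocalRing.ResidueField R) (N.baseChange (IsLocalRing.ResidueField R)) :=
      (N.finrank_baseChange_of_leftInverse r hr).symm
    _ ≤ _ := by
      rw [← Submodule.map_coe, ← Submodule.baseChange_eq_span]
      exact Submodule.finrank_mono (Submodule.baseChange_mono _ hN_le)

/-- Eigenspace bound: if `(R,(π))` is a local PID which is not a field, `M` a finitely
generated free `R`-module, `φ` an `R`-endomorphism of `M` and `u ∈ R` an eigenvalue of the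
induced endomorphism of `K ⊗ M` (`K` the fraction field), then the dimension of the
`u`-eigenspace is at most `dim_F M̄_b` for every `b` with `π^b ∣ u`, where
`M_b = φ⁻¹(π^b M)` and `M̄_b` is its image in `M/πM ≅ F ⊗ M`. -/
theorem eigenspace_dim_le_dim_Mbar
    (R : Type) [CommRing R] [IsDomain R] [IsPrincipalIdealRing R] [IsLocalRing R]
    (hR : ¬ IsField R)
    (π : R) (hπ : IsLocalRing.maximalIdeal R = Ideal.span {π})
    (M : Type) [AddCommGroup M] [Module R M] [Module.Free R M] [Module.Finite R M]
    (φ : M →ₗ[R] M)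
    (u : R)
    (hu : Module.End.HasEigenvalue (LinearMap.baseChange (FractionRing R) φ)
      (algebraMap R (FractionRing R) u))
    (b : ℕ) (hb : π ^ b ∣ u) :
    Module.finrank (FractionRing R)
        ↥(Module.End.eigenspace (LinearMap.baseChange (FractionRing R) φ)
          (algebraMap R (FractionRing R) u)) ≤
      Module.finrank (IsLocalRing.ResidueField R)
        ↥(Submodule.span (IsLocalRing.ResidueField R)
          (⇑(TensorProduct.mk R (IsLocalRing.ResidueField R) M 1) ''
            ↑(Submodule.comap φ (Ideal.span {π ^ b} • (⊤ : Submodule R M))))) :=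
  eigenspace_dim_le_dim_Mbar_general R π M φ u b hb
end

section
/- Let q be a power of a prime p, let n ≥ 4, and set r = q²·[n−3 choose 1]_q − 1, s = −(q+1), and k' = q(q+1)·[n−2 choose 1]_q, where [m choose 1]_q = (q^m − 1)/(q − 1). Then: (a) if n is odd, gcd(r,s) = 1, gcd(k',s) = q+1, and gcd(k',r) = 1; (b) if n is even, gcd(r,s) = q+1, gcd(s,k') = q+1, and every common prime divisor of r and k' divides q+1. -/
/-!
Everything follows from `q ≡ -1 (mod q + 1)`: it makes `[m]_q ≡ 0` or `1 (mod q + 1)` according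
as `m` is even or odd, so `q + 1` divides `r + 1 = q²[n-3]_q` when `n` is odd and divides `r` when
`n` is even. The valency factors as `k' = (q + 1)(q + 1 + r)`, which gives the gcds involving `k'`.
-/

/-- The Gaussian binomial coefficient `[m choose 1]_q = 1 + q + q^2 + ⋯ + q^(m-1)`. -/
def gauss1 (q m : ℕ) : ℕ := ∑ i ∈ Finset.range m, q ^ i

lemma gauss1_succ_cast (q m : ℕ) : (gauss1 q (m + 1) : ℤ) = q * gauss1 q m + 1 := by
  simp [gauss1, geom_sum_succ]

lemma add_one_dvd_gauss1_of_even (q : ℕ) {m : ℕ} (hm : Even m) :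
    ((q : ℤ) + 1) ∣ gauss1 q m := by
  obtain ⟨j, rfl⟩ := hm
  induction j with
  | zero => simp [gauss1]
  | succ j ih =>
    have hstep : (gauss1 q (j + 1 + (j + 1)) : ℤ) = q ^ 2 * gauss1 q (j + j) + (q + 1) := by
      rw [show j + 1 + (j + 1) = j + j + 1 + 1 by omega, gauss1_succ_cast, gauss1_succ_cast]
      ring
    rw [hstep]
    exact dvd_add (dvd_mul_of_dvd_right ih _) dvd_rfl

lemma add_one_dvd_gauss1_sub_one_of_odd (q : ℕ) {m : ℕ} (hm : Odd m) :
    ((q : ℤ) + 1) ∣ gauss1 q m - 1 := by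
  obtain ⟨j, rfl⟩ := hm
  rw [gauss1_succ_cast, add_sub_cancel_right]
  exact dvd_mul_of_dvd_right (add_one_dvd_gauss1_of_even q (even_two_mul j)) _

lemma add_one_dvd_sq_mul_gauss1_sub_one_of_odd (q : ℕ) {m : ℕ} (hm : Odd m) :
    ((q : ℤ) + 1) ∣ q ^ 2 * gauss1 q m - 1 := by
  have hsplit : (q : ℤ) ^ 2 * gauss1 q m - 1 = q ^ 2 * (gauss1 q m - 1) + (q + 1) * (q - 1) := by
    ring
  rw [hsplit]
  exact dvd_add (dvd_mul_of_dvd_right (add_one_dvd_gauss1_sub_one_of_odd q hm) _)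
    (dvd_mul_right _ _)

lemma mul_add_one_mul_gauss1_succ (q m : ℕ) :
    (q : ℤ) * (q + 1) * gauss1 q (m + 1) = (q + 1) * ((q + 1) + (q ^ 2 * gauss1 q m - 1)) := by
  rw [gauss1_succ_cast]
  ring

lemma isCoprime_of_dvd_add_one {R : Type*} [CommRing R] {a b : R} (h : a ∣ b + 1) :
    IsCoprime a b := by
  obtain ⟨c, hc⟩ := h
  exact ⟨c, -1, by linear_combination -hc⟩

theorem gcd_eigenvalues_grassmann_adjacency_general
    (n : ℕ) (hn : 4 ≤ n)
    (q : ℕ)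
    (r s k' : ℤ)
    (hr : r = (q : ℤ) ^ 2 * (gauss1 q (n - 3) : ℤ) - 1)
    (hs : s = -((q : ℤ) + 1))
    (hk' : k' = (q : ℤ) * ((q : ℤ) + 1) * (gauss1 q (n - 2) : ℤ)) :
    (Odd n → Int.gcd r s = 1 ∧ Int.gcd k' s = q + 1 ∧ Int.gcd k' r = 1) ∧
    (Even n → Int.gcd r s = q + 1 ∧ Int.gcd s k' = q + 1 ∧
      (∀ ℓ : ℕ, ℓ.Prime → (ℓ : ℤ) ∣ r → (ℓ : ℤ) ∣ k' → (ℓ : ℤ) ∣ ((q : ℤ) + 1))) := by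
  have hk'_eq : k' = ((q : ℤ) + 1) * (((q : ℤ) + 1) + r) := by
    rw [hk', hr, show n - 2 = n - 3 + 1 by omega, mul_add_one_mul_gauss1_succ]
  have hs_natAbs : s.natAbs = q + 1 := by
    rw [hs, Int.natAbs_neg]
    exact_mod_cast Int.natAbs_natCast (q + 1)
  have hs_dvd_k' : s ∣ k' := by rw [hs, hk'_eq, neg_dvd]; exact dvd_mul_right _ _
  refine ⟨fun hodd => ?_, fun heven => ?_⟩
  · have hn3 : Even (n - 3) := by obtain ⟨j, rfl⟩ := hodd; exact ⟨j - 1, by omega⟩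
    have hdvd : ((q : ℤ) + 1) ∣ r + 1 := by
      rw [hr, sub_add_cancel]
      exact dvd_mul_of_dvd_right (add_one_dvd_gauss1_of_even q hn3) _
    have hcop : IsCoprime ((q : ℤ) + 1) r := isCoprime_of_dvd_add_one hdvd
    refine ⟨?_, ?_, ?_⟩
    · rw [← Int.isCoprime_iff_gcd_eq_one, hs]
      exact hcop.symm.neg_right
    · rw [Int.gcd_eq_natAbs_right hs_dvd_k', hs_natAbs]
    · rw [← Int.isCoprime_iff_gcd_eq_one, hk'_eq]
      exact hcop.mul_left (by simpa only [mul_one] using hcop.add_mul_left_left 1)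
  · have hn3 : Odd (n - 3) := by obtain ⟨j, rfl⟩ := heven; exact ⟨j - 2, by omega⟩
    have hs_dvd_r : s ∣ r := by
      rw [hs, neg_dvd, hr]
      exact add_one_dvd_sq_mul_gauss1_sub_one_of_odd q hn3
    refine ⟨?_, ?_, ?_⟩
    · rw [Int.gcd_eq_natAbs_right hs_dvd_r, hs_natAbs]
    · rw [Int.gcd_eq_natAbs_left hs_dvd_k', hs_natAbs]
    · intro ℓ hℓ hℓr hℓk'
      rw [hk'_eq] at hℓk'
      rcases (Nat.prime_iff_prime_int.mp hℓ).dvd_or_dvd hℓk' with h | h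
      · exact h
      · exact (dvd_add_left hℓr).mp h

/-- Lemma on the gcds of the restricted eigenvalues `r = q²[n−3]_q − 1`, `s = −(q+1)` and the
valency `k' = q(q+1)[n−2]_q` of the Grassmann graph on `2`-subspaces of `F_q^n`. -/
theorem gcd_eigenvalues_grassmann_adjacency
    (p t n : ℕ) (hp : p.Prime) (ht : 1 ≤ t) (hn : 4 ≤ n)
    (q : ℕ) (hq : q = p ^ t)
    (r s k' : ℤ)
    (hr : r = (q : ℤ) ^ 2 * (gauss1 q (n - 3) : ℤ) - 1)
    (hs : s = -((q : ℤ) + 1))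
    (hk' : k' = (q : ℤ) * ((q : ℤ) + 1) * (gauss1 q (n - 2) : ℤ)) :
    (Odd n → Int.gcd r s = 1 ∧ Int.gcd k' s = q + 1 ∧ Int.gcd k' r = 1) ∧
    (Even n → Int.gcd r s = q + 1 ∧ Int.gcd s k' = q + 1 ∧
      (∀ ℓ : ℕ, ℓ.Prime → (ℓ : ℤ) ∣ r → (ℓ : ℤ) ∣ k' → (ℓ : ℤ) ∣ ((q : ℤ) + 1))) :=
  gcd_eigenvalues_grassmann_adjacency_general n hn q r s k' hr hs hk'
end

section
/- Let q = p^t be a prime power, let V = F_q^n with n ≥ 4, and let L' = k'I − A' be the integer Laplacian matrix of the Grassmann graph Γ' on 2-dimensional subspaces of V, where k' = q(q+1)[n−2 choose 1]_q and A' is the adjacency matrix. Let K(Γ') be the critical group of Γ', i.e., the torsion subgroup of the cokernel ℤ^{L₂}/L'(ℤ^{L₂}). Then the order of K(Γ') is coprime to p; equivalently, L' has no elementary divisors divisible by p. -/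
open scoped Classical

/-- The set of lines: `2`-dimensional subspaces of `F^n`. -/
abbrev TwoSubspaces (F : Type) [Field F] (n : ℕ) : Type :=
  {W : Submodule F (Fin n → F) // Module.finrank F W = 2}

/-- The cokernel `ℤ^{L₂}/M(ℤ^{L₂})` of an integer matrix `M` indexed by a finite type. -/
abbrev cokernel {V : Type} [Fintype V] (M : Matrix V V ℤ) : Type :=
  (V → ℤ) ⧸ LinearMap.range (Matrix.mulVecLin M)

/-!
Let `N` be the line–point incidence matrix of `V = F_q^n`. Two distinct lines meet in at most a
point, so `N Nᵀ = A' + (q + 1) I`; the lines through a point `P` are the points of `V / P`, so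
every column of `N` has `[n-1]_q` ones. Hence `L' = (q + 1) [n-1]_q I - N Nᵀ`, and `L'` kills the
constant vector. Modulo `p`, where `q ≡ 0`, every row of `N` has `q + 1 ≡ 1` ones, and
`Nᵀ N ≡ J` because two distinct points span exactly one line while `[n-1]_q ≡ 1`. So if
`L' y ≡ 0` then `y = N Nᵀ y = N (Nᵀ N) Nᵀ y ≡ N J Nᵀ y` is constant. A vector `y` with
`L' y = p x` is therefore a constant plus `p z`, whence `L' z = x`: the cokernel of `L'` has no
element of order `p`.
-/

open Module Matrix

theorem gauss1_succ (q m : ℕ) : gauss1 q (m + 1) = q * gauss1 q m + 1 := by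
  simp only [gauss1, Finset.sum_range_succ', pow_zero, pow_succ', ← Finset.mul_sum]

theorem gauss1_two (q : ℕ) : gauss1 q 2 = q + 1 := by
  simp [gauss1, Finset.sum_range_succ, add_comm]

theorem gauss1_cast_eq_one {R : Type*} [Semiring R] {q m : ℕ} (hq : (q : R) = 0) (hm : 0 < m) :
    (gauss1 q m : R) = 1 := by
  obtain ⟨k, rfl⟩ := Nat.exists_eq_add_of_lt hm
  simp [gauss1_succ, hq]

def Equiv.subtypeSubtypeComm {α : Type*} (p q : α → Prop) :
    {x : Subtype p // q x.1} ≃ {x : Subtype q // p x.1} :=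
  (subtypeSubtypeEquivSubtypeInter p q).trans <|
    (subtypeEquivRight fun _ => and_comm).trans (subtypeSubtypeEquivSubtypeInter q p).symm

theorem Submodule.finrank_comap_mkQ {K V : Type*} [DivisionRing K] [AddCommGroup V] [Module K V]
    [FiniteDimensional K V] (P : Submodule K V) (H : Submodule K (V ⧸ P)) :
    finrank K (H.comap P.mkQ) = finrank K P + finrank K H := by
  have := (P.mkQ.domRestrict (H.comap P.mkQ)).finrank_range_add_finrank_ker
  rw [LinearMap.ker_domRestrict, LinearMap.range_domRestrict, Submodule.ker_mkQ,
    Submodule.map_comap_eq_of_surjective P.mkQ_surjective,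
    (Submodule.comapSubtypeEquivOfLe (Submodule.le_comap_mkQ P H)).finrank_eq] at this
  omega

theorem Matrix.eq_const_of_mul_transpose_mulVec_eq {ι κ R : Type*} [Fintype ι] [Fintype κ]
    [Semiring R] {N : Matrix ι κ R} (hN : Nᵀ * N = of fun _ _ => 1)
    (hrow : ∀ c, N *ᵥ (fun _ => c) = fun _ => c) {y : ι → R} (hy : (N * Nᵀ) *ᵥ y = y) :
    ∃ c, y = fun _ => c := by
  refine ⟨∑ k, (Nᵀ *ᵥ y) k, ?_⟩
  calc y = (N * Nᵀ) *ᵥ ((N * Nᵀ) *ᵥ y) := by rw [hy, hy]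
    _ = N *ᵥ ((Nᵀ * N) *ᵥ (Nᵀ *ᵥ y)) := by simp only [mulVec_mulVec, Matrix.mul_assoc]
    _ = N *ᵥ (fun _ => ∑ k, (Nᵀ *ᵥ y) k) := by
      rw [hN]
      congr 1
      funext i
      simp [mulVec, dotProduct]
    _ = _ := hrow _

theorem cokernel_eq_zero_of_nsmul_eq_zero {ι : Type} [Fintype ι] {L : Matrix ι ι ℤ} {p : ℕ}
    (hp : p ≠ 0) (hL : L *ᵥ (fun _ => 1) = 0)
    (hker : ∀ y : ι → ZMod p,
      L.map (Int.castRingHom (ZMod p)) *ᵥ y = 0 → ∃ c, y = fun _ => c)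
    {g : cokernel L} (hg : p • g = 0) : g = 0 := by
  obtain ⟨x, rfl⟩ := Submodule.Quotient.mk_surjective _ g
  obtain ⟨y, hy⟩ : (p : ℤ) • x ∈ LinearMap.range L.mulVecLin := by
    rwa [← Submodule.Quotient.mk_eq_zero, Submodule.Quotient.mk_smul, natCast_zsmul]
  rw [mulVecLin_apply] at hy
  obtain ⟨c, hc⟩ := hker (Int.castRingHom (ZMod p) ∘ y) <| by
    funext i
    rw [← RingHom.map_mulVec, hy]
    simp
  obtain ⟨c, rfl⟩ := ZMod.intCast_surjective c
  choose z hz using fun i =>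
    (ZMod.intCast_eq_intCast_iff_dvd_sub c (y i) p).mp (congrFun hc i).symm
  have hyz : y = c • (fun _ => 1) + (p : ℤ) • z := by
    funext i
    simp [← hz]
  rw [Submodule.Quotient.mk_eq_zero]
  refine ⟨z, smul_right_injective _ (Int.natCast_ne_zero.mpr hp) ?_⟩
  simp only [mulVecLin_apply]
  rw [← hy, hyz, mulVec_add, mulVec_smul, mulVec_smul, hL, smul_zero, zero_add]

theorem coprime_card_torsion_of_nsmul_eq_zero {G : Type*} [AddCommGroup G] [Module.Finite ℤ G]
    {p : ℕ} (hp : p.Prime) (h : ∀ g : G, p • g = 0 → g = 0) :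
    Nat.Coprime p (Nat.card (AddCommGroup.torsion G)) := by
  have : Fact p.Prime := ⟨hp⟩
  have : Module.Finite ℤ (Submodule.torsion ℤ G) :=
    Module.Finite.iff_fg.mpr (IsNoetherian.noetherian _)
  have : Finite (AddCommGroup.torsion G) := by
    rw [← Submodule.torsion_int]
    exact Module.finite_of_fg_torsion _ Submodule.torsion_isTorsion
  rw [hp.coprime_iff_not_dvd]
  intro hdvd
  obtain ⟨g, hg⟩ := exists_prime_addOrderOf_dvd_card' p hdvd
  have hg0 : g = 0 := Subtype.ext <| h g <| by
    rw [← AddSubgroup.coe_nsmul, ← hg, addOrderOf_nsmul_eq_zero, AddSubgroup.coe_zero]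
  rw [hg0, addOrderOf_zero] at hg
  exact hp.one_lt.ne' hg.symm

namespace Grassmann

variable (F : Type*) [Field F] (V : Type*) [AddCommGroup V] [Module F V]

abbrev Points := {P : Submodule F V // finrank F P = 1}

abbrev Lines := {u : Submodule F V // finrank F u = 2}

def graph : SimpleGraph (Lines F V) where
  Adj v w := v ≠ w ∧ v.1 ⊓ w.1 ≠ ⊥
  symm := ⟨fun v w h => ⟨h.1.symm, by rw [inf_comm]; exact h.2⟩⟩
  loopless := ⟨fun _ h => h.1 rfl⟩

noncomputable def incidence (R : Type*) [Zero R] [One R] : Matrix (Lines F V) (Points F V) R :=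
  of fun u P => if P.1 ≤ u.1 then 1 else 0

variable {F V} {R : Type*} [CommRing R]

theorem transpose_incidence_mul_incidence_apply [Fintype (Lines F V)] (P Q : Points F V) :
    ((incidence F V R)ᵀ * incidence F V R) P Q =
      Nat.card {u : Lines F V // P.1 ⊔ Q.1 ≤ u.1} := by
  simp only [mul_apply, transpose_apply, incidence, of_apply, ← ite_and, mul_ite, mul_one,
    mul_zero]
  rw [Finset.sum_boole, Nat.card_eq_fintype_card, Fintype.card_subtype]
  simp only [sup_le_iff, and_comm]

variable [FiniteDimensional F V]

theorem finrank_inf_le_one {u v : Lines F V} (h : u ≠ v) : finrank F ↥(u.1 ⊓ v.1) ≤ 1 := by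
  by_contra! hlt
  have hle : finrank F ↥(u.1 ⊓ v.1) ≤ 2 := (Submodule.finrank_mono inf_le_left).trans_eq u.2
  have hu : u.1 ⊓ v.1 = u.1 := Submodule.eq_of_le_of_finrank_le inf_le_left (by omega)
  have hv : u.1 ⊓ v.1 = v.1 := Submodule.eq_of_le_of_finrank_le inf_le_right (by omega)
  exact h (Subtype.ext (hu.symm.trans hv))

theorem finrank_sup_eq_two {P Q : Points F V} (h : P ≠ Q) : finrank F ↥(P.1 ⊔ Q.1) = 2 := by
  have hPQ : P.1 ⊓ Q.1 = ⊥ := by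
    by_contra hne
    have hpos := Submodule.one_le_finrank_iff.mpr hne
    have hP : P.1 ⊓ Q.1 = P.1 := Submodule.eq_of_le_of_finrank_le inf_le_left (by omega)
    have hQ : P.1 ⊓ Q.1 = Q.1 := Submodule.eq_of_le_of_finrank_le inf_le_right (by omega)
    exact h (Subtype.ext (hP.symm.trans hQ))
  have := Submodule.finrank_sup_add_finrank_inf_eq P.1 Q.1
  rw [hPQ, finrank_bot, P.2, Q.2] at this
  omega

theorem card_lines_ge_line (u : Lines F V) : Nat.card {v : Lines F V // u.1 ≤ v.1} = 1 := by
  rw [Nat.card_eq_one_iff_exists]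
  refine ⟨⟨u, le_rfl⟩, fun v => Subtype.ext <| Subtype.ext ?_⟩
  exact (Submodule.eq_of_le_of_finrank_le v.2 (by rw [u.2, v.1.2])).symm

variable [Fintype F]

theorem card_points (W : Type*) [AddCommGroup W] [Module F W] [FiniteDimensional F W] :
    Nat.card (Points F W) = gauss1 (Fintype.card F) (finrank F W) := by
  rw [← Nat.card_congr (Projectivization.equivSubmodule F W),
    Projectivization.card_of_finrank F W rfl, Nat.card_eq_fintype_card, gauss1]

theorem card_points_le (W : Submodule F V) :
    Nat.card {P : Points F V // P.1 ≤ W} = gauss1 (Fintype.card F) (finrank F W) := by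
  rw [← card_points]
  refine Nat.card_congr <| (Equiv.subtypeSubtypeComm _ _).trans <| Equiv.symm <|
    (Submodule.MapSubtype.orderIso W).toEquiv.subtypeEquiv fun H => ?_
  change _ ↔ finrank F (H.map W.subtype) = 1
  rw [Submodule.finrank_map_subtype_eq]

theorem card_lines_ge (P : Points F V) :
    Nat.card {u : Lines F V // P.1 ≤ u.1} = gauss1 (Fintype.card F) (finrank F V - 1) := by
  obtain ⟨P, hP⟩ := P
  have hquot : finrank F V - 1 = finrank F (V ⧸ P) := by
    rw [← P.finrank_quotient_add_finrank, hP, Nat.add_sub_cancel]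
  rw [hquot, ← card_points]
  refine Nat.card_congr <| (Equiv.subtypeSubtypeComm _ _).trans <| Equiv.symm <|
    (Submodule.comapMkQRelIso P).toEquiv.subtypeEquiv fun H => ?_
  change _ ↔ finrank F (H.comap P.mkQ) = 2
  rw [Submodule.finrank_comap_mkQ, hP]
  omega

theorem incidence_mul_transpose_apply [Fintype (Points F V)] (u v : Lines F V) :
    (incidence F V R * (incidence F V R)ᵀ) u v =
      gauss1 (Fintype.card F) (finrank F ↥(u.1 ⊓ v.1)) := by
  simp only [mul_apply, transpose_apply, incidence, of_apply, ← ite_and, mul_ite, mul_one,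
    mul_zero]
  rw [Finset.sum_boole, ← card_points_le, Nat.card_eq_fintype_card, Fintype.card_subtype]
  simp only [le_inf_iff, and_comm]

theorem incidence_mul_transpose [Fintype (Points F V)] :
    incidence F V R * (incidence F V R)ᵀ =
      (graph F V).adjMatrix R + (Fintype.card F + 1 : R) • 1 := by
  ext u v
  rw [incidence_mul_transpose_apply, Matrix.add_apply, Matrix.smul_apply,
    SimpleGraph.adjMatrix_apply]
  rcases eq_or_ne u v with rfl | huv
  · rw [inf_idem, u.2, gauss1_two]
    simp
  · have hadj : (graph F V).Adj u v ↔ 1 ≤ finrank F ↥(u.1 ⊓ v.1) := by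
      rw [Submodule.one_le_finrank_iff]
      exact and_iff_right huv
    have hle := finrank_inf_le_one huv
    interval_cases h : finrank F ↥(u.1 ⊓ v.1) <;> simp [hadj, huv, gauss1]

theorem incidence_mulVec_const [Fintype (Points F V)] (c : R) :
    incidence F V R *ᵥ (fun _ => c) = fun _ => (Fintype.card F + 1 : R) * c := by
  funext u
  simp only [mulVec, dotProduct, incidence, of_apply, ite_mul, one_mul, zero_mul]
  rw [Finset.sum_ite, Finset.sum_const_zero, add_zero, Finset.sum_const, nsmul_eq_mul,
    ← Fintype.card_subtype, Fintype.card_eq_nat_card, card_points_le, u.2, gauss1_two]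
  push_cast
  ring

theorem transpose_incidence_mulVec_const [Fintype (Lines F V)] (c : R) :
    (incidence F V R)ᵀ *ᵥ (fun _ => c) =
      fun _ => (gauss1 (Fintype.card F) (finrank F V - 1) : R) * c := by
  funext P
  simp only [mulVec, dotProduct, transpose_apply, incidence, of_apply, ite_mul, one_mul, zero_mul]
  rw [Finset.sum_ite, Finset.sum_const_zero, add_zero, Finset.sum_const, nsmul_eq_mul,
    ← Fintype.card_subtype, Fintype.card_eq_nat_card, card_lines_ge]

theorem transpose_incidence_mul_incidence [Fintype (Lines F V)]
    (hq : (Fintype.card F : R) = 0) (hV : 2 ≤ finrank F V) :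
    (incidence F V R)ᵀ * incidence F V R = of fun _ _ => 1 := by
  ext P Q
  rw [transpose_incidence_mul_incidence_apply, of_apply]
  rcases eq_or_ne P Q with rfl | hPQ
  · rw [sup_idem, card_lines_ge, gauss1_cast_eq_one hq (by omega)]
  · rw [card_lines_ge_line ⟨_, finrank_sup_eq_two hPQ⟩, Nat.cast_one]

theorem adjMatrix_mulVec_const [Fintype (Points F V)] [Fintype (Lines F V)]
    (hV : 2 ≤ finrank F V) (c : R) :
    (graph F V).adjMatrix R *ᵥ (fun _ => c) = fun _ =>
      ((Fintype.card F * (Fintype.card F + 1) * gauss1 (Fintype.card F) (finrank F V - 2) : ℕ)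
        : R) * c := by
  have hadj : (graph F V).adjMatrix R =
      incidence F V R * (incidence F V R)ᵀ - (Fintype.card F + 1 : R) • 1 := by
    rw [incidence_mul_transpose, add_sub_cancel_right]
  have hg : gauss1 (Fintype.card F) (finrank F V - 1) =
      Fintype.card F * gauss1 (Fintype.card F) (finrank F V - 2) + 1 := by
    rw [← gauss1_succ]
    congr 1
    omega
  rw [hadj, sub_mulVec, ← mulVec_mulVec, transpose_incidence_mulVec_const,
    incidence_mulVec_const, smul_mulVec, one_mulVec, hg]
  funext u
  simp only [Pi.sub_apply, Pi.smul_apply, smul_eq_mul]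
  push_cast
  ring

theorem eq_const_of_adjMatrix_mulVec_eq_zero [Fintype (Points F V)] [Fintype (Lines F V)]
    (hq : (Fintype.card F : R) = 0) (hV : 2 ≤ finrank F V) {y : Lines F V → R}
    (hy : (graph F V).adjMatrix R *ᵥ y = 0) : ∃ c, y = fun _ => c := by
  apply eq_const_of_mul_transpose_mulVec_eq (transpose_incidence_mul_incidence hq hV)
  · intro c
    rw [incidence_mulVec_const, hq, zero_add, one_mul]
  · rw [incidence_mul_transpose, add_mulVec, hy, zero_add, hq, zero_add, one_smul, one_mulVec]

end Grassmann

/-- The order of the critical group of the Grassmann graph on `2`-dimensional subspaces of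
`F_q^n`, `q = p^t`, is coprime to `p`: the Laplacian has no elementary divisors divisible
by `p`. -/
theorem critical_group_grassmann_coprime_p
    (p t n : ℕ) (hp : p.Prime) (ht : 1 ≤ t) (hn : 4 ≤ n)
    (q : ℕ) (hq : q = p ^ t)
    (F : Type) [Field F] [Fintype F] (hF : Fintype.card F = q)
    [Fintype (TwoSubspaces F n)]
    (A' : Matrix (TwoSubspaces F n) (TwoSubspaces F n) ℤ)
    (hA' : ∀ v w : TwoSubspaces F n,
      A' v w = if v ≠ w ∧ v.1 ⊓ w.1 ≠ ⊥ then 1 else 0)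
    (L' : Matrix (TwoSubspaces F n) (TwoSubspaces F n) ℤ)
    (hL' : L' = ((q * (q + 1) * gauss1 q (n - 2) : ℕ) : ℤ) • (1 : Matrix _ _ ℤ) - A') :
    Nat.Coprime p (Nat.card ↥(AddCommGroup.torsion (cokernel L'))) := by
  have : Fact p.Prime := ⟨hp⟩
  have hV : 2 ≤ finrank F (Fin n → F) := by rw [finrank_fin_fun]; omega
  have hqp : (Fintype.card F : ZMod p) = 0 := by
    rw [hF, hq, Nat.cast_pow, ZMod.natCast_self, zero_pow (by omega)]
  have hA : A' = (Grassmann.graph F (Fin n → F)).adjMatrix ℤ := by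
    ext v w
    rw [hA', SimpleGraph.adjMatrix_apply]
    exact if_congr Iff.rfl rfl rfl
  have hrow : L' *ᵥ (fun _ => 1) = 0 := by
    rw [hL', hA, sub_mulVec, Grassmann.adjMatrix_mulVec_const hV, smul_mulVec, one_mulVec, ← hF]
    funext v
    simp
  have hLp : L'.map (Int.castRingHom (ZMod p)) =
      -(Grassmann.graph F (Fin n → F)).adjMatrix (ZMod p) := by
    ext v w
    rw [Matrix.map_apply, hL', Matrix.sub_apply, Matrix.smul_apply, hA, Matrix.neg_apply,
      SimpleGraph.adjMatrix_apply, SimpleGraph.adjMatrix_apply, ← hF]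
    simp [hqp]
  let : Fintype (Grassmann.Points F (Fin n → F)) := Fintype.ofFinite _
  refine coprime_card_torsion_of_nsmul_eq_zero hp fun g =>
    cokernel_eq_zero_of_nsmul_eq_zero hp.ne_zero hrow fun y hy => ?_
  rw [hLp, neg_mulVec, neg_eq_zero] at hy
  exact Grassmann.eq_const_of_adjMatrix_mulVec_eq_zero hqp hV hy
end
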